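/- The largest eigenvalue μ of the Laplacian matrix of the graph H strictly exceeds max over all pairs of adjacent vertices v ~ j of 2·(m_v + m_j) − 4·m_v·m_j/(d_v + d_j). (This gives a counterexample to conjectured bound 51 of Brankov, Hansen and Stevanović.) -/

import Mathlib

/-- The edge list of the graph. -/
def edgeList : List (Fin 20 × Fin 20) :=
  [(0,1),(0,2),(0,3),(0,4),(0,5),(0,6),(0,7),(0,8),(0,9),(0,10),(0,11),(0,12),(0,13),(0,14),(0,15),(0,16),(0,17),(0,18),(0,19),(1,3),(1,7),(1,13),(2,6),(2,12),(2,14),(3,5),(3,14),(4,5),(4,16),(4,18),(5,12),(6,14),(6,16),(6,17),(7,8),(7,18),(8,13),(8,17),(9,12),(9,15),(9,19),(10,11),(10,15),(10,19),(11,15),(11,18),(13,16),(17,19)]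

/-- The graph under consideration. -/
def G : SimpleGraph (Fin 20) where
  Adj v w := (v, w) ∈ edgeList ∨ (w, v) ∈ edgeList
  symm := ⟨fun _ _ h => h.symm⟩
  loopless := ⟨by intro v; fin_cases v <;> decide⟩

instance : DecidableRel G.Adj :=
  fun v w => inferInstanceAs (Decidable ((v, w) ∈ edgeList ∨ (w, v) ∈ edgeList))

/-- `d v` is the degree of the vertex `v`, as a real number. -/
noncomputable def d (v : Fin 20) : ℝ := G.degree v

/-- `m v` is the average of the degrees of the neighbours of `v`. -/
noncomputable def m (v : Fin 20) : ℝ :=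
  (∑ u ∈ G.neighborFinset v, (G.degree u : ℝ)) / d v

/-! ### Auxiliary facts -/

def dN : Fin 20 → ℕ := ![19,4,4,4,4,4,5,4,4,4,4,4,4,4,4,4,4,4,4,4]
def sN : Fin 20 → ℕ := ![77,31,32,31,31,31,35,31,31,31,31,31,31,31,32,31,32,32,31,31]

set_option maxHeartbeats 4000000 in
lemma hdeg : ∀ v, G.degree v = dN v := by decide

set_option maxHeartbeats 4000000 in
lemma hS : ∀ v, (∑ u ∈ G.neighborFinset v, G.degree u) = sN v := by decide

lemma hadj0 : ∀ i : Fin 20, i ≠ 0 → G.Adj i 0 := by decide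

lemma hd (v : Fin 20) : d v = (dN v : ℝ) := by unfold d; rw [hdeg]

lemma hm (v : Fin 20) : m v = (sN v : ℝ) / (dN v : ℝ) := by
  unfold m
  rw [← Nat.cast_sum, hS v, hd v]

lemma hm0 : m 0 = 77 / 19 := by rw [hm]; norm_num [sN, dN]

lemma hd0 : d 0 = 19 := by rw [hd]; norm_num [dN]

lemma hm_bounds (v : Fin 20) (h : v ≠ 0) : 7 ≤ m v ∧ m v ≤ 8 := by
  rw [hm]
  fin_cases v
  · exact absurd rfl h
  all_goals norm_num [sN, dN]

lemma hd_bounds (v : Fin 20) (h : v ≠ 0) : 4 ≤ d v ∧ d v ≤ 5 := by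
  rw [hd]
  fin_cases v
  · exact absurd rfl h
  all_goals norm_num [dN]

/-! ### The eigenvector `(19, -1, …, -1)` with eigenvalue `20` -/

noncomputable def xv : Fin 20 → ℝ := fun v => if v = 0 then 19 else -1

lemma hcol : (fun i => G.lapMatrix ℝ i 0) = xv := by
  funext i
  simp only [SimpleGraph.lapMatrix, Matrix.sub_apply, SimpleGraph.degMatrix,
    Matrix.diagonal_apply, SimpleGraph.adjMatrix_apply, xv]
  by_cases h : i = 0
  · subst h
    rw [if_pos rfl, if_pos rfl, if_neg (G.irrefl), hdeg]
    norm_num [dN]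
  · rw [if_neg h, if_neg h, if_pos (hadj0 i h)]
    norm_num

lemma hxv : xv = (20 : ℝ) • (Pi.single 0 1 : Fin 20 → ℝ) - fun _ => 1 := by
  funext v
  by_cases h : v = 0 <;> simp [xv, h, Pi.single_apply] <;> norm_num

lemma hmulvec : Matrix.mulVec (G.lapMatrix ℝ) xv = (20 : ℝ) • xv := by
  rw [hxv, Matrix.mulVec_sub, Matrix.mulVec_smul, Matrix.mulVec_single,
    G.lapMatrix_mulVec_const_eq_zero]
  rw [show MulOpposite.op (1 : ℝ) • (G.lapMatrix ℝ).col 0 = fun i => G.lapMatrix ℝ i 0 from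
    by ext i; simp]
  rw [hcol, hxv]
  ext v
  simp [smul_sub]
  ring

lemma h20 : (20 : ℝ) ∈ spectrum ℝ (G.lapMatrix ℝ) := by
  rw [← AlgEquiv.spectrum_eq (Matrix.toLinAlgEquiv' (R := ℝ) (n := Fin 20)) (G.lapMatrix ℝ),
    ← Module.End.hasEigenvalue_iff_mem_spectrum]
  refine Module.End.hasEigenvalue_of_hasEigenvector (x := xv)
    ⟨Module.End.mem_eigenspace_iff.2 ?_, ?_⟩
  · rw [Matrix.toLinAlgEquiv'_apply, hmulvec]
  · intro h
    have := congrFun h 0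
    simp [xv] at this

theorem laplacian_spectral_radius_exceeds_bound (μ : ℝ)
    (hmem : μ ∈ spectrum ℝ (G.lapMatrix ℝ))
    (hmax : ∀ ν ∈ spectrum ℝ (G.lapMatrix ℝ), ν ≤ μ) :
    (Finset.univ.filter fun p : _ × _ => G.Adj p.1 p.2).sup' (by decide)
      (fun p => 2 * (m p.1 + m p.2) - 4 * m p.1 * m p.2 / (d p.1 + d p.2)) < μ := by
  have hμ : (20 : ℝ) ≤ μ := hmax 20 h20
  rw [Finset.sup'_lt_iff]
  rintro ⟨u, v⟩ hp
  rw [Finset.mem_filter] at hp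
  have hadj : G.Adj u v := hp.2
  simp only
  have key : 2 * (m u + m v) - 4 * m u * m v / (d u + d v) < 20 := by
    by_cases hu : u = 0
    · have hv : v ≠ 0 := by rintro rfl; exact G.irrefl (hu ▸ hadj)
      subst hu
      obtain ⟨hb1, hb2⟩ := hm_bounds v hv
      obtain ⟨hc1, hc2⟩ := hd_bounds v hv
      rw [hm0, hd0]
      have hs : (0:ℝ) < 19 + d v := by linarith
      have h3 : 4 * (77/19) * 7 / 24 ≤ 4 * (77/19) * m v / (19 + d v) :=
        div_le_div₀ (by nlinarith) (by nlinarith) hs (by linarith)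
      nlinarith
    · by_cases hv : v = 0
      · obtain ⟨hb1, hb2⟩ := hm_bounds u hu
        obtain ⟨hc1, hc2⟩ := hd_bounds u hu
        subst hv
        rw [hm0, hd0]
        have hs : (0:ℝ) < d u + 19 := by linarith
        have h3 : 4 * 7 * (77/19) / 24 ≤ 4 * m u * (77/19) / (d u + 19) :=
          div_le_div₀ (by nlinarith) (by nlinarith) hs (by linarith)
        nlinarith
      · obtain ⟨ha1, ha2⟩ := hm_bounds u hu
        obtain ⟨hb1, hb2⟩ := hm_bounds v hv
        obtain ⟨hc1, hc2⟩ := hd_bounds u hu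
        obtain ⟨hd1, hd2⟩ := hd_bounds v hv
        have hs : (0:ℝ) < d u + d v := by linarith
        have h3 : 4 * 7 * 7 / 10 ≤ 4 * m u * m v / (d u + d v) :=
          div_le_div₀ (by nlinarith) (by nlinarith) hs (by linarith)
        nlinarith
  linarith
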